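/- Let A be an order complete Banach lattice algebra, let (p_λ)_{λ∈Λ} be a family of elements of A, each of which is both a left band projection and a right band projection, such that p_α p_β = 0 for α ≠ β and p_α p_α = p_α for all α. For Γ ⊆ Λ × Λ let P_Γ : A → A denote the unique linear band projection satisfying P_Γ x = sup({p_α x p_β : (α,β) ∈ Γ} ∪ {0}) for x ≥ 0. Then for all Γ, Δ ⊆ Λ × Λ: P_Γ ∘ P_Δ = P_{Γ∩Δ}, and P_Γ + P_Δ − P_Γ ∘ P_Δ = P_{Γ∪Δ}; in particular, the inner band projections {P_Γ : Γ ⊆ Λ × Λ} form a Boolean algebra with minimum P_∅, maximum P_{Λ×Λ}, infimum P_Γ ∧ P_Δ = P_{Γ∩Δ}, supremum P_Γ ∨ P_Δ = P_{Γ∪Δ}, and complement P_{(Λ×Λ)∖Γ}. -/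

import Mathlib

/-!
Write `T_{a,b} x = p_a x p_b`. Each `T_{a,b}` satisfies `0 ≤ T ≤ id` on the positive cone, and an
additive map with this property preserves suprema. Orthogonality and idempotence of the `p_λ` give
`T_{a,b} (p_c x p_d) = p_a x p_b` if `(c, d) = (a, b)` and `0` otherwise, so `T_{a,b} (P_Δ x)` is
`p_a x p_b` or `0` according as `(a, b) ∈ Δ` or not; taking the supremum over `(a, b) ∈ Γ` gives
`P_Γ (P_Δ x) = P_{Γ∩Δ} x` for `x ≥ 0`. In particular each `P_Γ` is idempotent, and for idempotent
`0 ≤ P, Q ≤ id` one has `P x ⊓ Q x = P (Q x)`. As `P_{Γ∪Δ} x = P_Γ x ⊔ P_Δ x`, the identity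
`u ⊓ v + u ⊔ v = u + v` gives the second formula. Positive elements span `A`, so it suffices to
check both formulas on them.
-/

section OrderedAddCommGroup

variable {A : Type*} [AddCommGroup A] [PartialOrder A] [IsOrderedAddMonoid A]

def IsBetweenZeroAndId (T : A → A) : Prop :=
  ∀ y, 0 ≤ y → 0 ≤ T y ∧ T y ≤ y

variable {F : Type*} [FunLike F A A] [AddMonoidHomClass F A A] {T : F}

namespace IsBetweenZeroAndId

lemma monotone (hT : IsBetweenZeroAndId T) : Monotone T := fun x y hxy => by
  simpa [map_sub] using (hT (y - x) (sub_nonneg.2 hxy)).1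

lemma monotone_sub_map (hT : IsBetweenZeroAndId T) : Monotone fun x => x - T x :=
  fun x y hxy => by
    have h := (hT (y - x) (sub_nonneg.2 hxy)).2
    rw [map_sub, sub_le_sub_iff] at h
    rwa [sub_le_sub_iff, add_comm x]

lemma map_isLUB (hT : IsBetweenZeroAndId T) {S : Set A} {s : A} (hs : IsLUB S s) :
    IsLUB (T '' S) (T s) := by
  refine ⟨hT.monotone.mem_upperBounds_image hs.1, fun u hu => ?_⟩
  have h : s ≤ u + (s - T s) := hs.2 fun t ht =>
    calc t = T t + (t - T t) := (add_sub_cancel _ _).symm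
      _ ≤ u + (s - T s) :=
        add_le_add (hu (Set.mem_image_of_mem _ ht)) (hT.monotone_sub_map (hs.1 ht))
  simpa using sub_le_iff_le_add.2 h

lemma map_eq_self_of_le_map (hT : IsBetweenZeroAndId T) {x z : A} (hx : T (T x) = T x)
    (hz : 0 ≤ z) (hzx : z ≤ T x) : T z = z := by
  refine le_antisymm (hT z hz).2 ?_
  have h := (hT (T x - z) (sub_nonneg.2 hzx)).2
  rwa [map_sub, hx, sub_le_sub_iff_left] at h

end IsBetweenZeroAndId

end OrderedAddCommGroup

section LatticeOrderedAddCommGroup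

variable {A : Type*} [AddCommGroup A] [Lattice A] [IsOrderedAddMonoid A]

lemma IsBetweenZeroAndId.inf_eq_map_map {F : Type*} [FunLike F A A] [AddMonoidHomClass F A A]
    {P Q : F} (hP : IsBetweenZeroAndId P) (hQ : IsBetweenZeroAndId Q) {x : A} (hx : 0 ≤ x)
    (hPx : P (P x) = P x) (hQx : Q (Q x) = Q x) : P x ⊓ Q x = P (Q x) := by
  have hz : 0 ≤ P x ⊓ Q x := le_inf (hP x hx).1 (hQ x hx).1
  refine le_antisymm ?_ (le_inf (hP.monotone (hQ x hx).2) (hP (Q x) (hQ x hx).1).2)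
  calc P x ⊓ Q x = P (Q (P x ⊓ Q x)) := by
        rw [hQ.map_eq_self_of_le_map hQx hz inf_le_right,
          hP.map_eq_self_of_le_map hPx hz inf_le_left]
    _ ≤ P (Q x) := hP.monotone (hQ.monotone (inf_le_right.trans (hQ x hx).2))

lemma AddMonoidHomClass.ext_of_nonneg {B F : Type*} [AddGroup B] [FunLike F A B]
    [AddMonoidHomClass F A B] {f g : F} (h : ∀ x, 0 ≤ x → f x = g x) : f = g :=
  DFunLike.ext f g fun x => by
    rw [← posPart_sub_negPart x, map_sub, map_sub, h _ (posPart_nonneg x),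
      h _ (negPart_nonneg x)]

end LatticeOrderedAddCommGroup

section InnerProjection

variable {R A Λ : Type*} [CommSemiring R] [AddCommGroup A] [Module R A]
  (mul : A →ₗ[R] A →ₗ[R] A) (p : Λ → A)

def sandwich (a b : A) : A →ₗ[R] A :=
  mul a ∘ₗ mul.flip b

@[simp]
lemma sandwich_apply (a b x : A) : sandwich mul a b x = mul a (mul x b) :=
  rfl

def innerTerms (Γ : Set (Λ × Λ)) (x : A) : Set A :=
  {y : A | ∃ ab ∈ Γ, y = sandwich mul (p ab.1) (p ab.2) x} ∪ {0}

lemma innerTerms_union (Γ Δ : Set (Λ × Λ)) (x : A) :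
    innerTerms mul p (Γ ∪ Δ) x = innerTerms mul p Γ x ∪ innerTerms mul p Δ x := by
  ext y
  simp only [innerTerms, Set.mem_union, Set.mem_ofPred_eq, Set.mem_singleton_iff]
  aesop

variable [Lattice A]

structure IsOrthogonalBandFamily : Prop where
  mul_assoc : ∀ a b c, mul (mul a b) c = mul a (mul b c)
  mul_nonneg : ∀ a b, 0 ≤ a → 0 ≤ b → 0 ≤ mul a b
  nonneg : ∀ l, 0 ≤ p l
  mul_left_le : ∀ l x, 0 ≤ x → mul (p l) x ≤ x
  mul_right_le : ∀ l x, 0 ≤ x → mul x (p l) ≤ x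
  mul_eq_zero_of_ne : ∀ a b, a ≠ b → mul (p a) (p b) = 0
  mul_self : ∀ a, mul (p a) (p a) = p a

def IsInnerProjection (Γ : Set (Λ × Λ)) (P : A → A) : Prop :=
  ∀ x, 0 ≤ x → IsLUB (innerTerms mul p Γ x) (P x)

variable {mul p}

namespace IsOrthogonalBandFamily

lemma isBetweenZeroAndId_sandwich (hp : IsOrthogonalBandFamily mul p) (a b : Λ) :
    IsBetweenZeroAndId (sandwich mul (p a) (p b)) := fun x hx => by
  have hxb : 0 ≤ mul x (p b) := hp.mul_nonneg _ _ hx (hp.nonneg b)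
  exact ⟨hp.mul_nonneg _ _ (hp.nonneg a) hxb,
    (hp.mul_left_le a _ hxb).trans (hp.mul_right_le b x hx)⟩

lemma sandwich_sandwich_eq_mul (hp : IsOrthogonalBandFamily mul p) (a b c d : Λ) (x : A) :
    sandwich mul (p a) (p b) (sandwich mul (p c) (p d) x) =
      mul (mul (p a) (p c)) (mul x (mul (p d) (p b))) := by
  simp only [sandwich_apply, hp.mul_assoc]

lemma sandwich_sandwich_self (hp : IsOrthogonalBandFamily mul p) (a b : Λ) (x : A) :
    sandwich mul (p a) (p b) (sandwich mul (p a) (p b) x) = sandwich mul (p a) (p b) x := by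
  rw [hp.sandwich_sandwich_eq_mul, hp.mul_self, hp.mul_self, sandwich_apply]

lemma sandwich_sandwich_of_ne (hp : IsOrthogonalBandFamily mul p) {a b c d : Λ}
    (h : (c, d) ≠ (a, b)) (x : A) :
    sandwich mul (p a) (p b) (sandwich mul (p c) (p d) x) = 0 := by
  rw [hp.sandwich_sandwich_eq_mul]
  by_cases hca : c = a
  · have hdb : d ≠ b := fun hdb => h (by rw [hca, hdb])
    simp [hp.mul_eq_zero_of_ne d b hdb]
  · simp [hp.mul_eq_zero_of_ne a c (Ne.symm hca)]

lemma eq_zero_or_of_mem_image_sandwich (hp : IsOrthogonalBandFamily mul p) {Δ : Set (Λ × Λ)}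
    {a b : Λ} {x y : A} (hy : y ∈ sandwich mul (p a) (p b) '' innerTerms mul p Δ x) :
    y = 0 ∨ (a, b) ∈ Δ ∧ y = sandwich mul (p a) (p b) x := by
  obtain ⟨_, ⟨cd, hcd, rfl⟩ | rfl, rfl⟩ := hy
  · by_cases h : cd = (a, b)
    · subst h
      exact Or.inr ⟨hcd, hp.sandwich_sandwich_self _ _ x⟩
    · exact Or.inl (hp.sandwich_sandwich_of_ne h x)
  · exact Or.inl (map_zero _)

end IsOrthogonalBandFamily

variable {Γ Δ : Set (Λ × Λ)}

lemma IsInnerProjection.isBetweenZeroAndId {P : A → A} (hp : IsOrthogonalBandFamily mul p)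
    (hP : IsInnerProjection mul p Γ P) : IsBetweenZeroAndId P := fun x hx => by
  refine ⟨(hP x hx).1 (Or.inr rfl), (hP x hx).2 ?_⟩
  rintro _ (⟨ab, -, rfl⟩ | rfl)
  exacts [(hp.isBetweenZeroAndId_sandwich ab.1 ab.2 x hx).2, hx]

lemma IsInnerProjection.apply_union {P Q PQ : A → A} (hP : IsInnerProjection mul p Γ P)
    (hQ : IsInnerProjection mul p Δ Q) (hPQ : IsInnerProjection mul p (Γ ∪ Δ) PQ) {x : A}
    (hx : 0 ≤ x) : PQ x = P x ⊔ Q x :=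
  (hPQ x hx).unique (by rw [innerTerms_union]; exact (hP x hx).union (hQ x hx))

variable [IsOrderedAddMonoid A]

namespace IsInnerProjection

variable {P : A →ₗ[R] A}

lemma sandwich_apply_of_mem (hp : IsOrthogonalBandFamily mul p)
    (hP : IsInnerProjection mul p Δ P) {a b : Λ} (hab : (a, b) ∈ Δ) {x : A} (hx : 0 ≤ x) :
    sandwich mul (p a) (p b) (P x) = sandwich mul (p a) (p b) x := by
  refine ((hp.isBetweenZeroAndId_sandwich a b).map_isLUB (hP x hx)).unique
    (IsGreatest.isLUB ⟨⟨_, Or.inl ⟨(a, b), hab, rfl⟩, hp.sandwich_sandwich_self a b x⟩, ?_⟩)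
  intro y hy
  rcases hp.eq_zero_or_of_mem_image_sandwich hy with rfl | ⟨-, rfl⟩
  exacts [(hp.isBetweenZeroAndId_sandwich a b x hx).1, le_rfl]

lemma sandwich_apply_of_notMem (hp : IsOrthogonalBandFamily mul p)
    (hP : IsInnerProjection mul p Δ P) {a b : Λ} (hab : (a, b) ∉ Δ) {x : A} (hx : 0 ≤ x) :
    sandwich mul (p a) (p b) (P x) = 0 := by
  refine ((hp.isBetweenZeroAndId_sandwich a b).map_isLUB (hP x hx)).unique
    (IsGreatest.isLUB ⟨⟨0, Or.inr rfl, map_zero _⟩, ?_⟩)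
  intro y hy
  rcases hp.eq_zero_or_of_mem_image_sandwich hy with rfl | ⟨hab', -⟩
  exacts [le_rfl, absurd hab' hab]

lemma innerTerms_apply (hp : IsOrthogonalBandFamily mul p) (hP : IsInnerProjection mul p Δ P)
    {x : A} (hx : 0 ≤ x) :
    innerTerms mul p Γ (P x) = innerTerms mul p (Γ ∩ Δ) x := by
  ext y
  simp only [innerTerms, Set.mem_union, Set.mem_ofPred_eq, Set.mem_singleton_iff]
  constructor
  · rintro (⟨ab, hab, rfl⟩ | rfl)
    · by_cases hΔ : ab ∈ Δ
      · exact Or.inl ⟨ab, ⟨hab, hΔ⟩, hP.sandwich_apply_of_mem hp hΔ hx⟩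
      · exact Or.inr (hP.sandwich_apply_of_notMem hp hΔ hx)
    · exact Or.inr rfl
  · rintro (⟨ab, ⟨hab, hΔ⟩, rfl⟩ | rfl)
    · exact Or.inl ⟨ab, hab, (hP.sandwich_apply_of_mem hp hΔ hx).symm⟩
    · exact Or.inr rfl

lemma comp_apply {Q PQ : A →ₗ[R] A} (hp : IsOrthogonalBandFamily mul p)
    (hP : IsInnerProjection mul p Γ P) (hQ : IsInnerProjection mul p Δ Q)
    (hPQ : IsInnerProjection mul p (Γ ∩ Δ) PQ) {x : A}
    (hx : 0 ≤ x) : P (Q x) = PQ x := by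
  have h := hP (Q x) (hQ.isBetweenZeroAndId hp x hx).1
  rw [hQ.innerTerms_apply hp hx] at h
  exact h.unique (hPQ x hx)

lemma map_map (hp : IsOrthogonalBandFamily mul p) (hP : IsInnerProjection mul p Γ P) {x : A}
    (hx : 0 ≤ x) : P (P x) = P x :=
  hP.comp_apply hp hP (by rwa [Set.inter_self]) hx

end IsInnerProjection

end InnerProjection

theorem inner_band_projections_boolean_algebra
    {A : Type*} [NormedAddCommGroup A] [Lattice A] [IsOrderedAddMonoid A]
    [NormedSpace ℝ A]
    (mul : A →ₗ[ℝ] A →ₗ[ℝ] A)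
    (mul_assoc : ∀ a b c : A, mul (mul a b) c = mul a (mul b c))
    (mul_nonneg : ∀ a b : A, 0 ≤ a → 0 ≤ b → 0 ≤ mul a b)
    {Λ : Type*} (p : Λ → A)
    (hpos : ∀ l, 0 ≤ p l)
    (hL : ∀ l, ∀ x : A, 0 ≤ x → mul (p l) x ≤ x ∧ mul (mul (p l) (p l)) x = mul (p l) x)
    (hR : ∀ l, ∀ x : A, 0 ≤ x → mul x (p l) ≤ x ∧ mul x (mul (p l) (p l)) = mul x (p l))
    (horth : ∀ a b : Λ, a ≠ b → mul (p a) (p b) = 0)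
    (hidem : ∀ a : Λ, mul (p a) (p a) = p a)
    (Γ Δ : Set (Λ × Λ))
    (PΓ PΔ Pinter Punion : A →ₗ[ℝ] A)
    (hPΓ : ∀ x : A, 0 ≤ x →
      IsLUB ({y : A | ∃ ab ∈ Γ, y = mul (p ab.1) (mul x (p ab.2))} ∪ {0}) (PΓ x))
    (hPΔ : ∀ x : A, 0 ≤ x →
      IsLUB ({y : A | ∃ ab ∈ Δ, y = mul (p ab.1) (mul x (p ab.2))} ∪ {0}) (PΔ x))
    (hPinter : ∀ x : A, 0 ≤ x →
      IsLUB ({y : A | ∃ ab ∈ Γ ∩ Δ, y = mul (p ab.1) (mul x (p ab.2))} ∪ {0}) (Pinter x))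
    (hPunion : ∀ x : A, 0 ≤ x →
      IsLUB ({y : A | ∃ ab ∈ Γ ∪ Δ, y = mul (p ab.1) (mul x (p ab.2))} ∪ {0}) (Punion x)) :
    PΓ ∘ₗ PΔ = Pinter ∧ PΓ + PΔ - PΓ ∘ₗ PΔ = Punion := by
  have hp : IsOrthogonalBandFamily mul p := ⟨mul_assoc, mul_nonneg, hpos,
    fun l x hx => (hL l x hx).1, fun l x hx => (hR l x hx).1, horth, hidem⟩
  have hΓ : IsInnerProjection mul p Γ PΓ := hPΓ
  have hΔ : IsInnerProjection mul p Δ PΔ := hPΔ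
  have hcomp : ∀ x, 0 ≤ x → PΓ (PΔ x) = Pinter x := fun x hx => hΓ.comp_apply hp hΔ hPinter hx
  refine ⟨AddMonoidHomClass.ext_of_nonneg hcomp, AddMonoidHomClass.ext_of_nonneg fun x hx => ?_⟩
  have hinf : PΓ x ⊓ PΔ x = PΓ (PΔ x) :=
    (hΓ.isBetweenZeroAndId hp).inf_eq_map_map (hΔ.isBetweenZeroAndId hp) hx (hΓ.map_map hp hx)
      (hΔ.map_map hp hx)
  simp only [LinearMap.sub_apply, LinearMap.add_apply, LinearMap.comp_apply]
  rw [← hinf, hΓ.apply_union hΔ hPunion hx, ← inf_add_sup (PΓ x) (PΔ x), add_sub_cancel_left]
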